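/- arXiv:2311.15893 — 8 statements merged into one kernel-verified Lean document; each statement's English description precedes it below -/
import Mathlib

section
/- For p ≥ 1, q ≥ 1 odd, and 0 ≤ i ≤ p-1, the binomial coefficient C(2^p·q + 2^p - 2^i, 2^(p+1) - 2^(i+1)) is odd. -/
/-! Writing `q = 2m + 1`, the top argument is `2^(p+1) m + (2^(p+1) - 2^i)`, whose binary digits
in positions `i, …, p` are all `1`, while the bottom argument `2^(p+1) - 2^(i+1)` has its digits
exactly in positions `i+1, …, p`. By Lucas' theorem for the prime `2`, `C(n, k)` is odd as soon as
every binary digit of `k` is also a digit of `n`. -/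

namespace Nat

theorem odd_choose_of_testBit_imp_testBit {n k : ℕ}
    (h : ∀ j, k.testBit j = true → n.testBit j = true) : Odd (n.choose k) := by
  induction k using Nat.strong_induction_on generalizing n with
  | _ k ih =>
    rcases Nat.eq_zero_or_pos k with rfl | hk
    · simp
    have hdiv : Odd ((n / 2).choose (k / 2)) :=
      ih (k / 2) (Nat.div_lt_self hk one_lt_two) fun j hj => by
        rw [testBit_div_two] at hj ⊢
        exact h _ hj
    have hmod : Odd ((n % 2).choose (k % 2)) := by
      rcases mod_two_eq_zero_or_one k with hk0 | hk1
      · simp [hk0]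
      · have hn1 : n % 2 = 1 := by simpa [testBit_zero, hk1] using h 0
        simp [hk1, hn1]
    have hlucas := @Choose.choose_modEq_choose_mod_mul_choose_div_nat n k 2 ⟨prime_two⟩
    rw [odd_iff, hlucas, ← odd_iff]
    exact hmod.mul hdiv

theorem testBit_two_pow_sub_two_pow {a b : ℕ} (hab : a ≤ b) (j : ℕ) :
    (2 ^ b - 2 ^ a).testBit j = decide (a ≤ j ∧ j < b) := by
  have hsplit : 2 ^ b - 2 ^ a = 2 ^ a * (2 ^ (b - a) - 1) := by
    rw [Nat.mul_sub, mul_one, ← pow_add, Nat.add_sub_cancel' hab]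
  rw [hsplit, testBit_two_pow_mul, testBit_two_pow_sub_one]
  by_cases ha : a ≤ j <;> simp [ha]
  omega

end Nat

theorem stmt5_general (p q i : ℕ) (hq : Odd q) (hi : i ≤ p - 1) :
    Odd (Nat.choose (2 ^ p * q + 2 ^ p - 2 ^ i) (2 ^ (p + 1) - 2 ^ (i + 1))) := by
  obtain ⟨m, rfl⟩ := hq
  have hip : i ≤ p := by omega
  have hlow : 2 ^ (p + 1) - 2 ^ i < 2 ^ (p + 1) :=
    Nat.sub_lt (Nat.two_pow_pos _) (Nat.two_pow_pos _)
  have hn : 2 ^ p * (2 * m + 1) + 2 ^ p - 2 ^ i = 2 ^ (p + 1) * m + (2 ^ (p + 1) - 2 ^ i) := by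
    have hodd : 2 ^ p * (2 * m + 1) = 2 ^ (p + 1) * m + 2 ^ p := by ring
    have hdouble : 2 ^ (p + 1) = 2 ^ p + 2 ^ p := by ring
    have : 2 ^ i ≤ 2 ^ p := Nat.pow_le_pow_right two_pos hip
    omega
  rw [hn]
  refine Nat.odd_choose_of_testBit_imp_testBit fun j hj => ?_
  rw [Nat.testBit_two_pow_sub_two_pow (by omega)] at hj
  simp only [decide_eq_true_eq] at hj
  rw [Nat.testBit_two_pow_mul_add m hlow, if_pos hj.2, Nat.testBit_two_pow_sub_two_pow (by omega)]
  simp only [decide_eq_true_eq]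
  omega

theorem stmt5 (p q i : ℕ) (hp : 1 ≤ p) (hq : Odd q) (hq1 : 1 ≤ q) (hi : i ≤ p - 1) :
    Odd (Nat.choose (2 ^ p * q + 2 ^ p - 2 ^ i) (2 ^ (p + 1) - 2 ^ (i + 1))) :=
  stmt5_general p q i hq hi
end

section
/- For p ≥ 1 and q ≥ 1 odd, the binomial coefficient C(2^p·q + 2^p - 1, 2^(p+1) - 1) is odd. -/
lemma aux_odd_choose (t : ℕ) : ∀ a : ℕ, (Nat.choose (2 ^ t * a + (2 ^ t - 1)) (2 ^ t - 1)) % 2 = 1 := by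
  induction t with
  | zero => intro a; simp
  | succ t ih =>
    intro a
    have hx : 1 ≤ 2 ^ t := Nat.one_le_two_pow
    have hn : 2 ^ (t + 1) * a + (2 ^ (t + 1) - 1)
        = 2 * (2 ^ t * a + (2 ^ t - 1)) + 1 := by
      have e1 : 2 ^ (t + 1) = 2 * 2 ^ t := by ring
      have e2 : 2 ^ (t + 1) * a = 2 * (2 ^ t * a) := by ring
      omega
    have hk : 2 ^ (t + 1) - 1 = 2 * (2 ^ t - 1) + 1 := by
      rw [pow_succ]; omega
    rw [hn, hk]
    have : Fact (Nat.Prime 2) := ⟨Nat.prime_two⟩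
    have h := Choose.choose_modEq_choose_mod_mul_choose_div_nat
      (n := 2 * (2 ^ t * a + (2 ^ t - 1)) + 1) (k := 2 * (2 ^ t - 1) + 1) (p := 2)
    have h1 : (2 * (2 ^ t * a + (2 ^ t - 1)) + 1) % 2 = 1 := by omega
    have h2 : (2 * (2 ^ t - 1) + 1) % 2 = 1 := by omega
    have h3 : (2 * (2 ^ t * a + (2 ^ t - 1)) + 1) / 2 = 2 ^ t * a + (2 ^ t - 1) := by omega
    have h4 : (2 * (2 ^ t - 1) + 1) / 2 = 2 ^ t - 1 := by omega
    rw [h1, h2, h3, h4] at h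
    simpa [Nat.ModEq, ih a] using h

theorem stmt6 (p q : ℕ) (hp : 1 ≤ p) (hq : Odd q) (hq1 : 1 ≤ q) :
    Odd (Nat.choose (2 ^ p * q + 2 ^ p - 1) (2 ^ (p + 1) - 1)) := by
  obtain ⟨m, hm⟩ := hq
  have hx : 1 ≤ 2 ^ p := Nat.one_le_two_pow
  have hn : 2 ^ p * q + 2 ^ p - 1 = 2 ^ (p + 1) * m + (2 ^ (p + 1) - 1) := by
    subst hm; rw [pow_succ]; ring_nf; omega
  rw [hn, Nat.odd_iff]
  exact aux_odd_choose (p + 1) m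
end

section
/- For p ≥ 1, q ≥ 1 odd, and 0 ≤ i ≤ p-1, the binomial coefficient C(2^p·q + 2^p - 2^i - 1, 2^(p+1) - 2^(i+1) - 1) is even. -/
/-!
By Lucas' theorem modulo 2, `n.choose k` is even as soon as some binary digit of `k` is `1`
where the digit of `n` is `0`. Digit `i` does it: modulo `2 ^ (i + 1)` the upper index is
`-(2 ^ i + 1)`, whose low bits are the complement of `2 ^ i`, while the lower index is `-1`.
-/

open Finset

namespace Nat

theorem prime_dvd_choose_of_digit_lt {p n k : ℕ} [Fact p.Prime] (i : ℕ)
    (h : n / p ^ i % p < k / p ^ i % p) : p ∣ n.choose k := by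
  have hzero : ∏ j ∈ range (i + 1), (n / p ^ j % p).choose (k / p ^ j % p) = 0 :=
    prod_eq_zero (self_mem_range_succ i) (choose_eq_zero_of_lt h)
  have hlucas := Choose.choose_modEq_choose_mul_prod_range_choose (n := n) (k := k) (p := p) (i + 1)
  rw [hzero, cast_zero, mul_zero] at hlucas
  exact_mod_cast Int.modEq_zero_iff_dvd.mp hlucas

theorem two_dvd_choose_of_testBit {n k : ℕ} (i : ℕ) (hn : n.testBit i = false)
    (hk : k.testBit i = true) : 2 ∣ n.choose k := by
  have : Fact (Nat.Prime 2) := ⟨prime_two⟩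
  refine prime_dvd_choose_of_digit_lt i ?_
  simp only [testBit_eq_decide_div_mod_eq, decide_eq_false_iff_not, decide_eq_true_eq] at hn hk
  omega

theorem mul_sub_eq_mul_pred_add {x c r : ℕ} (hc : 0 < c) (hr : r ≤ x) :
    x * c - r = x * (c - 1) + (x - r) := by
  obtain ⟨c, rfl⟩ := Nat.exists_eq_add_of_lt hc
  simp only [zero_add, add_tsub_cancel_right, mul_add, mul_one]
  omega

theorem testBit_two_pow_mul_sub_succ {j c x : ℕ} (hc : 0 < c) (hx : x < 2 ^ j) {i : ℕ}
    (hi : i < j) : (2 ^ j * c - (x + 1)).testBit i = !x.testBit i := by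
  rw [mul_sub_eq_mul_pred_add hc hx, testBit_two_pow_mul_add _ (sub_lt (by positivity) (by omega)),
    if_pos hi, testBit_two_pow_sub_succ hx, decide_eq_true hi, Bool.true_and]

end Nat

theorem stmt7_general (p q i : ℕ) (hp : 1 ≤ p) (hi : i ≤ p - 1) :
    Even (Nat.choose (2 ^ p * q + 2 ^ p - 2 ^ i - 1) (2 ^ (p + 1) - 2 ^ (i + 1) - 1)) := by
  obtain ⟨d, rfl⟩ : ∃ d, p = i + 1 + d := ⟨p - i - 1, by omega⟩
  have hn : 2 ^ (i + 1 + d) * q + 2 ^ (i + 1 + d) - 2 ^ i - 1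
      = 2 ^ (i + 1) * (2 ^ d * (q + 1)) - (2 ^ i + 1) := by
    rw [pow_add]; ring_nf; omega
  have hk : 2 ^ (i + 1 + d + 1) - 2 ^ (i + 1) - 1 = 2 ^ (i + 1) * (2 ^ (d + 1) - 1) - (0 + 1) := by
    rw [Nat.mul_sub_one, ← pow_add]; ring_nf
  rw [hn, hk, even_iff_two_dvd]
  refine Nat.two_dvd_choose_of_testBit i ?_ ?_
  · rw [Nat.testBit_two_pow_mul_sub_succ (by positivity) (Nat.pow_lt_pow_succ one_lt_two)
      i.lt_succ_self, Nat.testBit_two_pow_self, Bool.not_true]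
  · rw [Nat.testBit_two_pow_mul_sub_succ (Nat.sub_pos_of_lt (Nat.one_lt_two_pow d.succ_ne_zero))
      (by positivity) i.lt_succ_self, Nat.zero_testBit, Bool.not_false]

theorem stmt7 (p q i : ℕ) (hp : 1 ≤ p) (hq : Odd q) (hq1 : 1 ≤ q) (hi : i ≤ p - 1) :
    Even (Nat.choose (2 ^ p * q + 2 ^ p - 2 ^ i - 1) (2 ^ (p + 1) - 2 ^ (i + 1) - 1)) :=
  stmt7_general p q i hp hi
end

section
/- For p ≥ 2, q ≥ 1 odd, and 1 ≤ i ≤ p-1, the binomial coefficient C(2^p·q + 2^p - 2^i, 2^(p+1) - 2^(i+1) - 1) is even; for i = 0 it is odd. -/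
/-!
Everything follows from Lucas' theorem at the prime `2`,
`C(n, k) ≡ C(n % 2, k % 2) * C(n / 2, k / 2) [MOD 2]`.
For `1 ≤ i`, the top entry is even and the bottom entry odd, so the lowest binary digit
contributes `C(0, 1) = 0`. For `i = 0` the top entry is `≡ -1 [MOD 2 ^ (p + 1)]`, i.e. its lowest
`p + 1` binary digits are all `1`, while the bottom entry is `< 2 ^ (p + 1)`, so every digit
contributes a factor `1`.
-/

theorem Nat.choose_modEq_two (n k : ℕ) :
    n.choose k ≡ (n % 2).choose (k % 2) * (n / 2).choose (k / 2) [MOD 2] :=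
  Choose.choose_modEq_choose_mod_mul_choose_div_nat

theorem Nat.even_choose_of_even_of_odd {n k : ℕ} (hn : Even n) (hk : Odd k) :
    Even (n.choose k) := by
  have h := Nat.choose_modEq_two n k
  rw [Nat.even_iff.mp hn, Nat.odd_iff.mp hk, Nat.choose_zero_succ, zero_mul] at h
  exact Nat.even_iff.mpr h

theorem Nat.odd_choose_of_mod_two_pow_eq {P n k : ℕ} (hn : n % 2 ^ P = 2 ^ P - 1)
    (hk : k < 2 ^ P) : Odd (n.choose k) := by
  induction P generalizing n k with
  | zero => simp_all
  | succ P ih =>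
    have hn2 : n % 2 = 1 := by
      rw [← Nat.mod_mod_of_dvd n (dvd_pow_self 2 P.succ_ne_zero), hn, pow_succ]
      have := Nat.one_le_two_pow (n := P)
      omega
    have hhalf : n / 2 % 2 ^ P = 2 ^ P - 1 := by
      rw [← Nat.mod_mul_right_div_self, ← pow_succ', hn, pow_succ]
      omega
    have hlow : (n % 2).choose (k % 2) = 1 := by
      rw [hn2]
      rcases Nat.mod_two_eq_zero_or_one k with h | h <;> simp [h]
    have h := Nat.choose_modEq_two n k
    rw [hlow, one_mul] at h
    rw [Nat.odd_iff, h, ← Nat.odd_iff]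
    exact ih hhalf (by rw [pow_succ] at hk; omega)

theorem stmt8_general (p q : ℕ) (hq : Odd q) :
    (∀ i, 1 ≤ i → i ≤ p - 1 →
        Even (Nat.choose (2 ^ p * q + 2 ^ p - 2 ^ i) (2 ^ (p + 1) - 2 ^ (i + 1) - 1))) ∧
      Odd (Nat.choose (2 ^ p * q + 2 ^ p - 2 ^ 0) (2 ^ (p + 1) - 2 ^ (0 + 1) - 1)) := by
  constructor
  · intro i hi hip
    have hpow : 2 ^ i * 2 ≤ 2 ^ p := pow_succ 2 i ▸ Nat.pow_le_pow_right two_pos (by omega)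
    have hpos : 1 ≤ 2 ^ i := Nat.one_le_two_pow
    apply Nat.even_choose_of_even_of_odd
    · rw [Nat.even_sub (by omega)]
      simp only [Nat.even_add, Nat.even_mul, Nat.even_pow, even_two, ne_eq, true_and,
        or_iff_left_iff_imp]
      omega
    · rw [Nat.odd_sub' (by rw [pow_succ, pow_succ]; omega), Nat.even_sub (by rw [pow_succ]; omega)]
      simp [Nat.even_pow]
  · obtain ⟨r, rfl⟩ := hq
    have hpos : 0 < 2 ^ (p + 1) := Nat.two_pow_pos _
    have hn : 2 ^ p * (2 * r + 1) + 2 ^ p - 2 ^ 0 = 2 ^ (p + 1) * r + (2 ^ (p + 1) - 1) := by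
      rw [pow_succ]
      ring_nf
      omega
    apply Nat.odd_choose_of_mod_two_pow_eq (P := p + 1) _ (by omega)
    rw [hn, Nat.mul_add_mod, Nat.mod_eq_of_lt (by omega)]

theorem stmt8 (p q : ℕ) (hp : 2 ≤ p) (hq : Odd q) (hq1 : 1 ≤ q) :
    (∀ i, 1 ≤ i → i ≤ p - 1 →
        Even (Nat.choose (2 ^ p * q + 2 ^ p - 2 ^ i) (2 ^ (p + 1) - 2 ^ (i + 1) - 1))) ∧
      Odd (Nat.choose (2 ^ p * q + 2 ^ p - 2 ^ 0) (2 ^ (p + 1) - 2 ^ (0 + 1) - 1)) :=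
  stmt8_general p q hq
end

section
/- For p ≥ 1 and q ≥ 1 odd, the binomial coefficient C(2^p·q + 2^p - 2^i - 3, 2^(p+1) - 2^(i+1) - 3) is odd if i = 1 and even if i = 0 or 2 ≤ i ≤ p - 1. -/
lemma modDivHelper {M t r : ℕ} (h : r < M) : (M * t + r) % M = r ∧ (M * t + r) / M = t := by
  constructor
  · rw [Nat.mul_add_mod, Nat.mod_eq_of_lt h]
  · rw [Nat.mul_add_div (Nat.lt_of_le_of_lt (Nat.zero_le _) h), Nat.div_eq_of_lt h, Nat.add_zero]

lemma lucas2 (a : ℕ) : ∀ n k : ℕ, Nat.choose n k ≡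
    Nat.choose (n % 2 ^ a) (k % 2 ^ a) * Nat.choose (n / 2 ^ a) (k / 2 ^ a) [MOD 2] := by
  haveI : Fact (Nat.Prime 2) := ⟨Nat.prime_two⟩
  induction a with
  | zero =>
    intro n k
    simp only [pow_zero, Nat.mod_one, Nat.div_one, Nat.choose_zero_right, one_mul]
    exact Nat.ModEq.refl _
  | succ a ih =>
    intro n k
    have h1 : Nat.choose n k ≡ Nat.choose (n % 2) (k % 2) * Nat.choose (n / 2) (k / 2) [MOD 2] :=
      Choose.choose_modEq_choose_mod_mul_choose_div_nat (p := 2)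
    have h2 := ih (n / 2) (k / 2)
    have e1 : ∀ m : ℕ, m % 2 ^ (a + 1) % 2 = m % 2 := fun m =>
      Nat.mod_mod_of_dvd m (dvd_pow_self 2 (Nat.succ_ne_zero a))
    have e2 : ∀ m : ℕ, m % 2 ^ (a + 1) / 2 = m / 2 % 2 ^ a := by
      intro m
      rw [pow_succ']
      exact Nat.mod_mul_right_div_self m 2 (2 ^ a)
    have e3 : ∀ m : ℕ, m / 2 / 2 ^ a = m / 2 ^ (a + 1) := by
      intro m; rw [Nat.div_div_eq_div_mul, ← pow_succ']
    have h3 : Nat.choose (n % 2 ^ (a+1)) (k % 2 ^ (a+1)) ≡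
        Nat.choose (n % 2) (k % 2) * Nat.choose (n / 2 % 2 ^ a) (k / 2 % 2 ^ a) [MOD 2] := by
      have := Choose.choose_modEq_choose_mod_mul_choose_div_nat
        (p := 2) (n := n % 2 ^ (a+1)) (k := k % 2 ^ (a+1))
      rwa [e1, e1, e2, e2] at this
    calc Nat.choose n k ≡ _ [MOD 2] := h1
      _ ≡ Nat.choose (n % 2) (k % 2) *
          (Nat.choose (n/2 % 2^a) (k/2 % 2^a) * Nat.choose (n/2/2^a) (k/2/2^a)) [MOD 2] :=
        (Nat.ModEq.refl _).mul h2
      _ = (Nat.choose (n % 2) (k % 2) * Nat.choose (n/2 % 2^a) (k/2 % 2^a)) *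
          Nat.choose (n/2^(a+1)) (k/2^(a+1)) := by rw [e3, e3, mul_assoc]
      _ ≡ Nat.choose (n % 2^(a+1)) (k % 2^(a+1)) *
          Nat.choose (n/2^(a+1)) (k/2^(a+1)) [MOD 2] := h3.symm.mul (Nat.ModEq.refl _)

theorem stmt9 (p q i : ℕ) (hp : 1 ≤ p) (hq : Odd q) (hq1 : 1 ≤ q) (hi : i ≤ p - 1)
    (hnonneg : 2 ^ (i + 1) + 3 ≤ 2 ^ (p + 1)) :
    (i = 1 →
        Odd (Nat.choose (2 ^ p * q + 2 ^ p - 2 ^ i - 3) (2 ^ (p + 1) - 2 ^ (i + 1) - 3))) ∧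
      (i ≠ 1 →
        Even (Nat.choose (2 ^ p * q + 2 ^ p - 2 ^ i - 3) (2 ^ (p + 1) - 2 ^ (i + 1) - 3))) := by
  obtain ⟨s, hs⟩ := hq
  constructor
  · rintro rfl
    -- i = 1, hence p ≥ 2
    have hp2 : 2 ≤ p := by
      by_contra h
      push_neg at h
      interval_cases p <;> norm_num at hnonneg
    have hP4 : (4:ℕ) ≤ 2 ^ p := by
      calc (4:ℕ) = 2 ^ 2 := rfl
        _ ≤ 2 ^ p := Nat.pow_le_pow_right (by norm_num) hp2
    set P := 2 ^ p with hPdef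
    have hPeven : P % 2 = 0 := by
      have : 2 ∣ P := dvd_pow_self 2 (by omega)
      omega
    have h2p1 : 2 ^ (p+1) = 2 * P := by rw [pow_succ, mul_comm]
    have hPq : P * q = 2 * P * s + P := by rw [hs]; ring
    have hn : P * q + P - 2 ^ 1 - 3 = 2 * P * s + (2 * P - 5) := by
      rw [hPq, pow_one]
      generalize 2 * P * s = A
      omega
    have hk : 2 ^ (p+1) - 2 ^ (1+1) - 3 = 2 * P - 7 := by
      rw [h2p1]
      norm_num
      omega
    have hlt : 2 * P - 5 < 2 * P := by omega
    obtain ⟨hmod, hdiv⟩ := modDivHelper (M := 2 * P) (t := s) hlt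
    have hkk : 2 * P - 7 < 2 * P := by omega
    have H := lucas2 (p+1) (P * q + P - 2 ^ 1 - 3) (2 ^ (p+1) - 2 ^ (1+1) - 3)
    rw [hk, hn, h2p1, hmod, hdiv, Nat.mod_eq_of_lt hkk, Nat.div_eq_of_lt hkk,
      Nat.choose_zero_right, mul_one] at H
    have H2 := lucas2 1 (2 * P - 5) (2 * P - 7)
    have e1 : (2 * P - 5) % 2 ^ 1 = 1 := by rw [pow_one]; omega
    have e2 : (2 * P - 7) % 2 ^ 1 = 1 := by rw [pow_one]; omega
    have e3 : (2 * P - 5) / 2 ^ 1 = P - 3 := by rw [pow_one]; omega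
    have e4 : (2 * P - 7) / 2 ^ 1 = P - 4 := by rw [pow_one]; omega
    rw [e1, e2, e3, e4, Nat.choose_self, one_mul] at H2
    have e5 : Nat.choose (P - 3) (P - 4) = P - 3 := by
      have h4 : P - 4 = P - 3 - 1 := by omega
      rw [h4, Nat.choose_symm (by omega : 1 ≤ P - 3), Nat.choose_one_right]
    rw [e5] at H2
    have hfin := H.trans H2
    rw [Nat.ModEq] at hfin
    rw [Nat.odd_iff, hn, hk, hfin]
    omega
  · intro hne
    rcases Nat.lt_or_ge i 2 with hi2 | hi2
    · -- i = 0
      have hi0 : i = 0 := by omega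
      subst hi0
      have hp2 : 2 ≤ p := by
        by_contra h
        push_neg at h
        interval_cases p <;> norm_num at hnonneg
      have hP4 : (4:ℕ) ≤ 2 ^ p := by
        calc (4:ℕ) = 2 ^ 2 := rfl
          _ ≤ 2 ^ p := Nat.pow_le_pow_right (by norm_num) hp2
      set P := 2 ^ p with hPdef
      have hPeven : P % 2 = 0 := by
        have : 2 ∣ P := dvd_pow_self 2 (by omega)
        omega
      have h2p1 : 2 ^ (p+1) = 2 * P := by rw [pow_succ, mul_comm]
      have hPq : P * q = 2 * (P * s) + P := by rw [hs]; ring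
      have H := lucas2 1 (P * q + P - 2 ^ 0 - 3) (2 ^ (p+1) - 2 ^ (0+1) - 3)
      have e1 : (P * q + P - 2 ^ 0 - 3) % 2 ^ 1 = 0 := by
        rw [hPq, pow_one, pow_zero]
        generalize P * s = A
        omega
      have e2 : (2 ^ (p+1) - 2 ^ (0+1) - 3) % 2 ^ 1 = 1 := by
        rw [h2p1, pow_one]
        norm_num
        omega
      rw [e1, e2] at H
      simp only [Nat.choose] at H
      rw [Nat.even_iff, H]
      simp
    · -- 2 ≤ i ≤ p - 1
      have hip : i + 1 ≤ p := by omega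
      set E := 2 ^ i with hEdef
      set M := 2 ^ (i+1) with hMdef
      have hME : M = 2 * E := by rw [hMdef, hEdef, pow_succ, mul_comm]
      have hE4 : (4:ℕ) ≤ E := by
        calc (4:ℕ) = 2 ^ 2 := rfl
          _ ≤ 2 ^ i := Nat.pow_le_pow_right (by norm_num) hi2
      -- n % M = E - 3
      have hpow : (2:ℕ) ^ p = M * 2 ^ (p - i - 1) := by
        rw [hMdef, ← pow_add]
        congr 1
        omega
      have hMT : 2 ^ p * q + 2 ^ p = M * (2 ^ (p - i - 1) * (2 * s + 2)) := by
        rw [hpow, hs]; ring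
      have hT1 : 0 < 2 ^ (p - i - 1) * (2 * s + 2) := by positivity
      obtain ⟨t, ht⟩ : ∃ t, 2 ^ (p - i - 1) * (2 * s + 2) = t + 1 :=
        ⟨2 ^ (p - i - 1) * (2 * s + 2) - 1, by omega⟩
      have hnM : (2 ^ p * q + 2 ^ p - 2 ^ i - 3) % M = E - 3 := by
        rw [hMT, ht, ← hEdef]
        have : M * (t + 1) = M * t + M := by ring
        rw [this, Nat.add_sub_assoc (by omega : E ≤ M), Nat.add_sub_assoc (by omega : 3 ≤ M - E)]
        have h2 : M - E - 3 = E - 3 := by omega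
        rw [h2, Nat.mul_add_mod, Nat.mod_eq_of_lt (by omega)]
      -- k % M = M - 3
      have hpow2 : (2:ℕ) ^ (p + 1) = M * 2 ^ (p - i) := by
        rw [hMdef, ← pow_add]
        congr 1
        omega
      have hS2 : (2:ℕ) ≤ 2 ^ (p - i) := by
        calc (2:ℕ) = 2 ^ 1 := rfl
          _ ≤ 2 ^ (p - i) := Nat.pow_le_pow_right (by norm_num) (by omega)
      obtain ⟨u, hu⟩ : ∃ u, (2:ℕ) ^ (p - i) = u + 2 := ⟨2 ^ (p - i) - 2, by omega⟩
      have hkM : (2 ^ (p + 1) - 2 ^ (i + 1) - 3) % M = M - 3 := by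
        rw [hpow2, hu, ← hMdef]
        have : M * (u + 2) = M * u + (M + M) := by ring
        rw [this, Nat.add_sub_assoc (by omega : M ≤ M + M), Nat.add_sub_assoc (by omega : 3 ≤ M + M - M)]
        have h2 : M + M - M - 3 = M - 3 := by omega
        rw [h2, Nat.mul_add_mod, Nat.mod_eq_of_lt (by omega)]
      have H := lucas2 (i+1) (2 ^ p * q + 2 ^ p - 2 ^ i - 3) (2 ^ (p + 1) - 2 ^ (i + 1) - 3)
      rw [← hMdef, hnM, hkM, Nat.choose_eq_zero_of_lt (by omega : E - 3 < M - 3), zero_mul] at H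
      rw [Nat.even_iff, H]
      simp
end

section
/- For p ≥ 1 and q ≥ 1 odd, the binomial coefficient C(2^p·q + 2^p - 2^i, 2^(p+1) - 2^(i+1) - 4) is odd for i ∈ {0, 1, 2} (when the lower index is nonnegative) and even for 3 ≤ i ≤ p - 1. -/
/-!
Lucas' theorem for the prime power `2 ^ m`: if `r, s < 2 ^ m`, then `C(2 ^ m a + r, s)` has the
parity of `C(r, s)`. Writing `q = 2c + 1`, the top index is `2 ^ (p+1) (c+1) - 2 ^ i`, so the
coefficient has the parity of `C(2 ^ (p+1) - 2 ^ i, 2 ^ (p+1) - 2 ^ (i+1) - 4)`, which by symmetry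
is `C(2 ^ (p+1) - 2 ^ i, 2 ^ i + 4)`. Reducing once more modulo a small power `2 ^ j` leaves
`C(7, 5)`, `C(6, 6)`, `C(12, 8)` for `i = 0, 1, 2`, all odd, and `C(2 ^ i, 2 ^ i + 4) = 0`
for `i ≥ 3`.
-/

namespace Choose

variable {p : ℕ} [Fact p.Prime]

theorem choose_pow_mul_add_modEq {m a b r s : ℕ} (hr : r < p ^ m) (hs : s < p ^ m) :
    (p ^ m * a + r).choose (p ^ m * b + s) ≡ a.choose b * r.choose s [MOD p] := by
  induction m generalizing r s with
  | zero =>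
    simp only [pow_zero, Nat.lt_one_iff] at hr hs
    simp [hr, hs, Nat.ModEq.refl]
  | succ m ih =>
    have hp : 0 < p := Nat.Prime.pos Fact.out
    have split (x : ℕ) (y : ℕ) : p ^ (m + 1) * x + y = p * (p ^ m * x + y / p) + y % p := by
      conv_lhs => rw [← Nat.div_add_mod y p]
      ring
    have hdiv (x : ℕ) (y : ℕ) : (p * x + y % p) / p = x := by
      rw [add_comm, Nat.add_mul_div_left _ _ hp, Nat.div_eq_of_lt (Nat.mod_lt _ hp), zero_add]
    have hmod (x : ℕ) (y : ℕ) : (p * x + y % p) % p = y % p := by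
      rw [add_comm, Nat.add_mul_mod_self_left, Nat.mod_mod]
    have hlt {y : ℕ} (hy : y < p ^ (m + 1)) : y / p < p ^ m :=
      Nat.div_lt_of_lt_mul (by rwa [← pow_succ'])
    calc (p ^ (m + 1) * a + r).choose (p ^ (m + 1) * b + s)
        ≡ (r % p).choose (s % p) * (p ^ m * a + r / p).choose (p ^ m * b + s / p) [MOD p] := by
          rw [split a r, split b s]
          refine choose_modEq_choose_mod_mul_choose_div_nat.trans ?_
          rw [hdiv, hdiv, hmod, hmod]
      _ ≡ (r % p).choose (s % p) * (a.choose b * (r / p).choose (s / p)) [MOD p] :=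
          (ih (hlt hr) (hlt hs)).mul_left _
      _ = a.choose b * ((r % p).choose (s % p) * (r / p).choose (s / p)) := by ring
      _ ≡ a.choose b * r.choose s [MOD p] :=
          (choose_modEq_choose_mod_mul_choose_div_nat (n := r) (k := s)).symm.mul_left _

end Choose

namespace Nat

theorem odd_iff_of_modEq_two {x y : ℕ} (h : x ≡ y [MOD 2]) : Odd x ↔ Odd y := by
  rw [odd_iff, odd_iff, h]

theorem odd_choose_two_pow_mul_add_iff {m a r s : ℕ} (hr : r < 2 ^ m) (hs : s < 2 ^ m) :
    Odd ((2 ^ m * a + r).choose s) ↔ Odd (r.choose s) := by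
  have : Fact (Nat.Prime 2) := ⟨prime_two⟩
  have h := Choose.choose_pow_mul_add_modEq (a := a) (b := 0) hr hs
  rw [mul_zero, zero_add, choose_zero_right, one_mul] at h
  exact odd_iff_of_modEq_two h

theorem odd_choose_two_pow_mul_sub_two_pow_iff {m a i j s : ℕ} (ha : 0 < a) (hij : i ≤ j)
    (hjm : j ≤ m) (hs : s < 2 ^ j) :
    Odd ((2 ^ m * a - 2 ^ i).choose s) ↔ Odd ((2 ^ j - 2 ^ i).choose s) := by
  have hi : 2 ^ i ≤ 2 ^ j := Nat.pow_le_pow_right two_pos hij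
  have hpos : 1 ≤ 2 ^ (m - j) * a := Nat.mul_pos (Nat.two_pow_pos _) ha
  have hmj : 2 ^ m * a = 2 ^ j * (2 ^ (m - j) * a) := by
    rw [← mul_assoc, ← pow_add, Nat.add_sub_cancel' hjm]
  have hsplit : 2 ^ m * a - 2 ^ i = 2 ^ j * (2 ^ (m - j) * a - 1) + (2 ^ j - 2 ^ i) := by
    have := Nat.le_mul_of_pos_right (2 ^ j) hpos
    rw [hmj, Nat.mul_sub_one]
    omega
  exact hsplit ▸ odd_choose_two_pow_mul_add_iff
    (Nat.sub_lt (Nat.two_pow_pos j) (Nat.two_pow_pos i)) hs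

theorem odd_choose_two_pow_sub_two_pow_iff {m i j s : ℕ} (hij : i ≤ j) (hjm : j ≤ m)
    (hs : s < 2 ^ j) :
    Odd ((2 ^ m - 2 ^ i).choose s) ↔ Odd ((2 ^ j - 2 ^ i).choose s) := by
  simpa using odd_choose_two_pow_mul_sub_two_pow_iff one_pos hij hjm hs

end Nat

theorem odd_choose_iff_odd_choose_two_pow_sub {p q i : ℕ} (hq : Odd q)
    (h : 2 ^ (i + 1) + 4 ≤ 2 ^ (p + 1)) :
    Odd ((2 ^ p * q + 2 ^ p - 2 ^ i).choose (2 ^ (p + 1) - 2 ^ (i + 1) - 4)) ↔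
      Odd ((2 ^ (p + 1) - 2 ^ i).choose (2 ^ i + 4)) := by
  obtain ⟨c, rfl⟩ := hq
  have hip : i + 1 < p + 1 :=
    (Nat.pow_lt_pow_iff_right one_lt_two).1 (by omega : 2 ^ (i + 1) < 2 ^ (p + 1))
  have hN : 2 ^ p * (2 * c + 1) + 2 ^ p = 2 ^ (p + 1) * (c + 1) := by ring
  have hi1 : 2 ^ (i + 1) = 2 * 2 ^ i := by ring
  rw [hN, Nat.odd_choose_two_pow_mul_sub_two_pow_iff c.succ_pos (by omega) le_rfl (by omega),
    Nat.choose_symm_of_eq_add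
      (show 2 ^ (p + 1) - 2 ^ i = (2 ^ (p + 1) - 2 ^ (i + 1) - 4) + (2 ^ i + 4) by omega)]

theorem stmt10_general (p q i : ℕ) (hq : Odd q) (hi : i ≤ p - 1) :
    (i ≤ 2 → 2 ^ (i + 1) + 4 ≤ 2 ^ (p + 1) →
        Odd (Nat.choose (2 ^ p * q + 2 ^ p - 2 ^ i) (2 ^ (p + 1) - 2 ^ (i + 1) - 4))) ∧
      (3 ≤ i →
        Even (Nat.choose (2 ^ p * q + 2 ^ p - 2 ^ i) (2 ^ (p + 1) - 2 ^ (i + 1) - 4))) := by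
  refine ⟨fun hi2 h => ?_, fun hi3 => ?_⟩
  · rw [odd_choose_iff_odd_choose_two_pow_sub hq h]
    have := Nat.one_le_two_pow (n := i + 1)
    have hp2 : 2 < p + 1 :=
      (Nat.pow_lt_pow_iff_right one_lt_two).1 (by omega : 2 ^ 2 < 2 ^ (p + 1))
    interval_cases i
    · exact (Nat.odd_choose_two_pow_sub_two_pow_iff (j := 3) (by omega) hp2 (by norm_num)).2
        (by decide)
    · exact (Nat.odd_choose_two_pow_sub_two_pow_iff (j := 3) (by omega) hp2 (by norm_num)).2
        (by decide)
    · have hp3 : 3 < p + 1 :=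
        (Nat.pow_lt_pow_iff_right one_lt_two).1 (by omega : 2 ^ 3 < 2 ^ (p + 1))
      exact (Nat.odd_choose_two_pow_sub_two_pow_iff (j := 4) (by omega) hp3 (by norm_num)).2
        (by decide)
  · have h8 : 2 ^ 3 ≤ 2 ^ i := Nat.pow_le_pow_right two_pos hi3
    have hip : 2 ^ (i + 1) ≤ 2 ^ p := Nat.pow_le_pow_right two_pos (by omega)
    have hi1 : 2 ^ (i + 1) = 2 * 2 ^ i := by ring
    have hp1 : 2 ^ (p + 1) = 2 * 2 ^ p := by ring
    rw [← Nat.not_odd_iff_even, odd_choose_iff_odd_choose_two_pow_sub hq (by omega),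
      Nat.odd_choose_two_pow_sub_two_pow_iff (j := i + 1) (by omega) (by omega) (by omega),
      hi1, Nat.choose_eq_zero_of_lt (by omega)]
    exact Nat.not_odd_zero

theorem stmt10 (p q i : ℕ) (hp : 1 ≤ p) (hq : Odd q) (hq1 : 1 ≤ q) (hi : i ≤ p - 1) :
    (i ≤ 2 → 2 ^ (i + 1) + 4 ≤ 2 ^ (p + 1) →
        Odd (Nat.choose (2 ^ p * q + 2 ^ p - 2 ^ i) (2 ^ (p + 1) - 2 ^ (i + 1) - 4))) ∧
      (3 ≤ i →
        Even (Nat.choose (2 ^ p * q + 2 ^ p - 2 ^ i) (2 ^ (p + 1) - 2 ^ (i + 1) - 4))) :=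
  stmt10_general p q i hq hi
end

section
/- For p ≥ 1 and q ≥ 1 odd, the binomial coefficient C(2^p·q + 2^p - 4, 2^(p+1) - 5) is even, while C(2^p·q + 2^p - 2, 2^(p+1) - 2), C(2^p·q + 2^p - 1, 2^(p+1) - 2), C(2^p·q + 2^p - 3, 2^(p+1) - 3), C(2^p·q + 2^p - 1, 2^(p+1) - 3), C(2^p·q + 2^p - 4, 2^(p+1) - 4), C(2^p·q + 2^p - 3, 2^(p+1) - 4), and C(2^p·q + 2^p - 1, 2^(p+1) - 5) are all odd (whenever the lower indices are nonnegative, e.g. p ≥ 2, with appropriate interpretation for p = 1). -/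
open Nat

private lemma lucas2_s11 (n k : ℕ) :
    choose n k % 2 = (choose (n % 2) (k % 2) * choose (n / 2) (k / 2)) % 2 := by
  haveI : Fact (Nat.Prime 2) := ⟨Nat.prime_two⟩
  exact Choose.choose_modEq_choose_mod_mul_choose_div_nat (p := 2)

private lemma odd_choose_of_subset :
    ∀ n k : ℕ, (∀ i, k.testBit i = true → n.testBit i = true) → choose n k % 2 = 1 := by
  intro n
  induction n using Nat.strong_induction_on with
  | _ n ih =>
    intro k h
    rcases Nat.eq_zero_or_pos n with rfl | hn
    · have hk : k = 0 := Nat.eq_of_testBit_eq fun i => by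
        rw [Nat.zero_testBit]
        by_contra hb
        simp only [Bool.not_eq_false] at hb
        simpa using h i hb
      simp [hk]
    · rw [lucas2_s11, Nat.mul_mod]
      have h0 : ¬ (n % 2 = 0 ∧ k % 2 = 1) := by
        rintro ⟨hn0, hk1⟩
        have := h 0 (by rw [Nat.testBit_zero]; simp [hk1])
        rw [Nat.testBit_zero] at this
        simp [hn0] at this
      have h1 : choose (n % 2) (k % 2) % 2 = 1 := by
        have hn2 := Nat.mod_two_eq_zero_or_one n
        have hk2 := Nat.mod_two_eq_zero_or_one k
        rcases hn2 with hn2 | hn2 <;> rcases hk2 with hk2 | hk2 <;>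
          simp [hn2, hk2] at h0 ⊢
      have h2 : choose (n / 2) (k / 2) % 2 = 1 := by
        apply ih (n / 2) (Nat.div_lt_self hn (by norm_num))
        intro i hi
        have : k.testBit (i + 1) = true := by rw [Nat.testBit_succ]; exact hi
        have := h (i + 1) this
        rwa [Nat.testBit_succ] at this
      rw [h1, h2]

private lemma testBit_high_part (t c j i : ℕ) (hj : 1 ≤ j) (hjt : j ≤ 2 ^ t)
    (hi : i < t) : (2 ^ t * c + 2 ^ t - j).testBit i = (2 ^ t - j).testBit i := by
  have h1 : 2 ^ t * c + 2 ^ t - j = 2 ^ t * c + (2 ^ t - j) := by omega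
  have h2 : (2 ^ t * c + (2 ^ t - j)) % 2 ^ t = 2 ^ t - j := by
    rw [Nat.mul_add_mod]
    exact Nat.mod_eq_of_lt (by omega)
  have := Nat.testBit_mod_two_pow (2 ^ t * c + (2 ^ t - j)) t i
  rw [h2, decide_eq_true hi, Bool.true_and] at this
  rw [h1, ← this]

private lemma odd_choose_gen (t c j k : ℕ) (hj : 1 ≤ j) (hjt : j ≤ 2 ^ t)
    (hk : k < 2 ^ t)
    (hsub : ∀ i, i < t → k.testBit i = true → (2 ^ t - j).testBit i = true) :
    choose (2 ^ t * c + 2 ^ t - j) k % 2 = 1 := by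
  apply odd_choose_of_subset
  intro i hi
  rcases lt_or_ge i t with hit | hit
  · rw [testBit_high_part t c j i hj hjt hit]
    exact hsub i hit hi
  · exfalso
    have : k.testBit i = false :=
      Nat.testBit_lt_two_pow (lt_of_lt_of_le hk (Nat.pow_le_pow_right (by norm_num) hit))
    rw [this] at hi; exact Bool.false_ne_true hi

theorem stmt11 (p q : ℕ) (hp : 2 ≤ p) (hq : Odd q) (hq1 : 1 ≤ q) :
    Even (Nat.choose (2 ^ p * q + 2 ^ p - 4) (2 ^ (p + 1) - 5)) ∧
      Odd (Nat.choose (2 ^ p * q + 2 ^ p - 2) (2 ^ (p + 1) - 2)) ∧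
      Odd (Nat.choose (2 ^ p * q + 2 ^ p - 1) (2 ^ (p + 1) - 2)) ∧
      Odd (Nat.choose (2 ^ p * q + 2 ^ p - 3) (2 ^ (p + 1) - 3)) ∧
      Odd (Nat.choose (2 ^ p * q + 2 ^ p - 1) (2 ^ (p + 1) - 3)) ∧
      Odd (Nat.choose (2 ^ p * q + 2 ^ p - 4) (2 ^ (p + 1) - 4)) ∧
      Odd (Nat.choose (2 ^ p * q + 2 ^ p - 3) (2 ^ (p + 1) - 4)) ∧
      Odd (Nat.choose (2 ^ p * q + 2 ^ p - 1) (2 ^ (p + 1) - 5)) := by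
  obtain ⟨c, hc⟩ := hq
  have h2p : 4 ≤ 2 ^ p := by
    calc (4:ℕ) = 2 ^ 2 := by norm_num
    _ ≤ 2 ^ p := Nat.pow_le_pow_right (by norm_num) hp
  have hpow : 2 ^ (p + 1) = 2 ^ p * 2 := pow_succ 2 p
  have hn : 2 ^ p * q + 2 ^ p = 2 ^ (p + 1) * c + 2 ^ (p + 1) := by
    rw [hc, hpow]; ring
  have hbit1 : ∀ i, i < p + 1 → (2 ^ (p + 1) - 1).testBit i = true := by
    intro i hi
    rw [Nat.testBit_two_pow_sub_one]
    exact decide_eq_true hi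
  have hbit34 : ∀ i, (2 ^ (p + 1) - 4).testBit i = true →
      (2 ^ (p + 1) - 3).testBit i = true := by
    intro i hi
    cases i with
    | zero =>
      rw [Nat.testBit_zero] at hi
      exfalso
      have : (2 ^ (p + 1) - 4) % 2 = 0 := by omega
      simp [this] at hi
    | succ i =>
      rw [Nat.testBit_succ] at hi ⊢
      have : (2 ^ (p + 1) - 3) / 2 = (2 ^ (p + 1) - 4) / 2 := by omega
      rw [this]; exact hi
  refine ⟨?_, ?_, ?_, ?_, ?_, ?_, ?_, ?_⟩
  · rw [Nat.even_iff, lucas2_s11]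
    have h1 : (2 ^ p * q + 2 ^ p - 4) % 2 = 0 := by
      rw [hn]
      have hd1 : (2:ℕ) ∣ 2 ^ (p + 1) * c := Dvd.dvd.mul_right (dvd_pow_self 2 p.succ_ne_zero) c
      omega
    have h2 : (2 ^ (p + 1) - 5) % 2 = 1 := by omega
    rw [h1, h2]
    simp
  all_goals rw [Nat.odd_iff, hn]
  · exact odd_choose_gen _ c 2 (2 ^ (p+1) - 2) (by omega) (by omega) (by omega) (fun i _ h => h)
  · exact odd_choose_gen _ c 1 (2 ^ (p+1) - 2) (by omega) (by omega) (by omega)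
      (fun i hi _ => hbit1 i hi)
  · exact odd_choose_gen _ c 3 (2 ^ (p+1) - 3) (by omega) (by omega) (by omega) (fun i _ h => h)
  · exact odd_choose_gen _ c 1 (2 ^ (p+1) - 3) (by omega) (by omega) (by omega)
      (fun i hi _ => hbit1 i hi)
  · exact odd_choose_gen _ c 4 (2 ^ (p+1) - 4) (by omega) (by omega) (by omega) (fun i _ h => h)
  · exact odd_choose_gen _ c 3 (2 ^ (p+1) - 4) (by omega) (by omega) (by omega)
      (fun i _ h => hbit34 i h)
  · exact odd_choose_gen _ c 1 (2 ^ (p+1) - 5) (by omega) (by omega) (by omega)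
      (fun i hi _ => hbit1 i hi)
end

section
/- Let R be a commutative Z/2-algebra generated over Z/2 by elements d and α with relations α^5 = 0 and d^(m-4) = d^(m-5)·α + d^(m-6)·α^2 + d^(m-7)·α^3 (for a fixed integer m ≥ 8, with d^j·α^i = 0 for j + i ≥ m). Then d^(m-4)·α^3 = d^(m-5)·α^4, d^(m-3)·α^2 = 0, d^(m-2)·α = 0, and d^(m-1) = d^(m-5)·α^4. -/
theorem stmt17 {R : Type*} [CommRing R] [CharP R 2] (d α : R) (m : ℕ) (hm : 8 ≤ m)
    (hα : α ^ 5 = 0)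
    (hrel : d ^ (m - 4) = d ^ (m - 5) * α + d ^ (m - 6) * α ^ 2 + d ^ (m - 7) * α ^ 3)
    (htop : ∀ j i : ℕ, m ≤ j + i → d ^ j * α ^ i = 0) :
    d ^ (m - 4) * α ^ 3 = d ^ (m - 5) * α ^ 4 ∧
      d ^ (m - 3) * α ^ 2 = 0 ∧
      d ^ (m - 2) * α = 0 ∧
      d ^ (m - 1) = d ^ (m - 5) * α ^ 4 := by
  obtain ⟨k, rfl⟩ := Nat.exists_eq_add_of_le hm
  have h2 : (2 : R) = 0 := by simpa using CharP.cast_eq_zero R 2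
  simp only [show 8 + k - 4 = k + 4 from by omega, show 8 + k - 5 = k + 3 from by omega,
    show 8 + k - 6 = k + 2 from by omega, show 8 + k - 7 = k + 1 from by omega,
    show 8 + k - 3 = k + 5 from by omega, show 8 + k - 2 = k + 6 from by omega,
    show 8 + k - 1 = k + 7 from by omega] at hrel ⊢
  have h1 : d ^ (k + 4) * α ^ 3 = d ^ (k + 3) * α ^ 4 := by
    linear_combination α ^ 3 * hrel + (d ^ (k + 2) + d ^ (k + 1) * α) * hα
  have g2 : d ^ (k + 5) * α ^ 2 = 0 := by
    linear_combination d * α ^ 2 * hrel + h1 + d ^ (k + 2) * hα + d ^ (k + 3) * α ^ 4 * h2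
  have g3 : d ^ (k + 6) * α = 0 := by
    linear_combination d ^ 2 * α * hrel + g2 + h1 + d ^ (k + 3) * α ^ 4 * h2
  have g4 : d ^ (k + 7) = d ^ (k + 3) * α ^ 4 := by
    linear_combination d ^ 3 * hrel + g3 + g2 + h1
  exact ⟨h1, g2, g3, g4⟩
end
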